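/- Let Λ be a block and λ ∈ Λ. Enumerate the 2^{def(λ)} distinct elements of {μ ∈ Λ : μ ⊃ λ} as μ_1, μ_2, ..., μ_n = λ so that μ_i > μ_j implies i < j. Let M(0) := {0} and for i = 1, ..., n let M(i) be the subspace of P(λ) := K_Λ e_λ generated by M(i−1) and the vectors (c μ_i λ̄) for all oriented cup diagrams c μ_i. Then {0} = M(0) ⊂ M(1) ⊂ ... ⊂ M(n) = P(λ) is a filtration of P(λ) by K_Λ-submodules, and M(i)/M(i−1) ≅ V(μ_i)⟨deg(μ_i λ̄)⟩ as graded K_Λ-modules for each i = 1, ..., n. -/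

import Mathlib

/-!
Common combinatorial framework for Brundan–Stroppel, "Highest weight categories arising
from Khovanov's diagram algebra I: cellularity": weights, blocks, the Bruhat order,
cup/cap diagrams, oriented cup/cap/circle diagrams, degrees, and the abstract properties
of the diagrammatically defined multiplications.
-/

namespace BrundanStroppel

open scoped Classical

inductive Label : Type
  | nought : Label
  | cross : Label
  | down : Label
  | up : Label
  deriving DecidableEq

def Label.flip : Label → Label
  | Label.down => Label.up
  | Label.up => Label.down
  | l => l

/-- A weight: a labelling of the vertices (a set of consecutive integers) of the number
line by `∘`, `×`, `∨` (down) or `∧` (up), such that outside a finite set of vertices it is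
impossible to find two vertices labelled `∨ ∧` in that order from left to right. -/
structure Weight where
  label : ℤ → Option Label
  consecutive : ∀ a b c : ℤ, a ≤ b → b ≤ c →
    (label a).isSome → (label c).isSome → (label b).isSome
  tail : ∃ S : Finset ℤ, ∀ i j : ℤ, i < j → i ∉ S → j ∉ S →
    ¬(label i = some Label.down ∧ label j = some Label.up)

def Weight.support (w : Weight) : Set ℤ := {i : ℤ | (w.label i).isSome}

/-- `Sim v w` (`v ∼ w`): `w` is obtained from `v` by permuting the `∨`'s and the `∧`'s
(and doing nothing to the `∘`'s and `×`'s). -/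
def Sim (v w : Weight) : Prop :=
  (∀ i : ℤ, (v.label i).isSome ↔ (w.label i).isSome) ∧
  (∀ i : ℤ, v.label i = some Label.nought ↔ w.label i = some Label.nought) ∧
  (∀ i : ℤ, v.label i = some Label.cross ↔ w.label i = some Label.cross) ∧
  Nonempty ({i : ℤ | v.label i = some Label.down} ≃ {i : ℤ | w.label i = some Label.down}) ∧
  Nonempty ({i : ℤ | v.label i = some Label.up} ≃ {i : ℤ | w.label i = some Label.up})

/-- A block is a `∼`-equivalence class of weights. -/
def IsBlock (Λ : Set Weight) : Prop := ∃ w : Weight, Λ = {v : Weight | Sim w v}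

/-- One step up in the Bruhat order: a `∨ ∧` pair of labels (in this order from left to
right) is swapped to `∧ ∨`; getting bigger means `∨`'s move to the right. -/
def BruhatStep (v w : Weight) : Prop :=
  ∃ i j : ℤ, i < j ∧
    v.label i = some Label.down ∧ v.label j = some Label.up ∧
    w.label i = some Label.up ∧ w.label j = some Label.down ∧
    ∀ k : ℤ, k ≠ i → k ≠ j → w.label k = v.label k

/-- The Bruhat order on weights. -/
def BruhatLE : Weight → Weight → Prop := Relation.ReflTransGen BruhatStep

def BruhatLT (v w : Weight) : Prop := BruhatLE v w ∧ v ≠ w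

/-- The data of a cup diagram (or, mirrored in the number line, of a cap diagram):
finitely many cups (lower semicircles) and some rays (going down to infinity) attached to
vertices of the number line, with no crossings. -/
structure ArcDiagram where
  support : Set ℤ
  consecutive : ∀ a b c : ℤ, a ≤ b → b ≤ c → a ∈ support → c ∈ support → b ∈ support
  cups : Set (ℤ × ℤ)
  rays : Set ℤ
  cups_finite : cups.Finite
  cups_lt : ∀ p ∈ cups, p.1 < p.2
  cups_subset : ∀ p ∈ cups, p.1 ∈ support ∧ p.2 ∈ support
  rays_subset : rays ⊆ support
  cups_disjoint : ∀ p ∈ cups, ∀ q ∈ cups, p ≠ q →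
    p.1 ≠ q.1 ∧ p.1 ≠ q.2 ∧ p.2 ≠ q.1 ∧ p.2 ≠ q.2
  rays_cups_disjoint : ∀ p ∈ cups, ∀ r ∈ rays, r ≠ p.1 ∧ r ≠ p.2
  cups_noncrossing : ∀ p ∈ cups, ∀ q ∈ cups, p.1 < q.1 → q.1 < p.2 → q.2 < p.2
  rays_cups_noncrossing : ∀ p ∈ cups, ∀ r ∈ rays, ¬(p.1 < r ∧ r < p.2)

/-- The mirror image `c*` of a diagram in the number line, turning a cup diagram into a
cap diagram and vice versa; on the underlying combinatorial data it is the identity. -/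
def ArcDiagram.star (c : ArcDiagram) : ArcDiagram := c

/-- A free vertex of a diagram: not the endpoint of any cup or ray. -/
def ArcDiagram.Free (c : ArcDiagram) (i : ℤ) : Prop :=
  i ∈ c.support ∧ i ∉ c.rays ∧ ∀ p ∈ c.cups, i ≠ p.1 ∧ i ≠ p.2

/-- `c w` is an oriented cup diagram. -/
def OrientedCup (c : ArcDiagram) (w : Weight) : Prop :=
  c.support = w.support ∧
  (∀ i : ℤ, c.Free i → w.label i = some Label.nought ∨ w.label i = some Label.cross) ∧
  (∀ p ∈ c.cups,
    (w.label p.1 = some Label.down ∧ w.label p.2 = some Label.up) ∨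
    (w.label p.1 = some Label.up ∧ w.label p.2 = some Label.down)) ∧
  (∀ r ∈ c.rays, w.label r = some Label.down ∨ w.label r = some Label.up) ∧
  (∀ r ∈ c.rays, ∀ t ∈ c.rays, r < t →
    ¬(w.label r = some Label.down ∧ w.label t = some Label.up))

/-- `w b` is an oriented cap diagram iff `b* w` is an oriented cup diagram. -/
def OrientedCap (w : Weight) (b : ArcDiagram) : Prop := OrientedCup b.star w

/-- The degree of the oriented cup diagram `c w`: its number of clockwise cups
(a cup is clockwise if its leftmost vertex is labelled `∧`). -/
noncomputable def cupDeg (c : ArcDiagram) (w : Weight) : ℕ :=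
  {p ∈ c.cups | w.label p.1 = some Label.up}.ncard

/-- The degree of the oriented cap diagram `w b`: its number of clockwise caps. -/
noncomputable def capDeg (w : Weight) (b : ArcDiagram) : ℕ := cupDeg b.star w

/-- `IsUnderline w c` says that `c = w̲`, i.e. `c w` is an oriented cup diagram of
degree `0`, all of whose cups are anticlockwise. -/
def IsUnderline (w : Weight) (c : ArcDiagram) : Prop :=
  OrientedCup c w ∧ ∀ p ∈ c.cups, w.label p.1 = some Label.down

/-- `IsOverline w b` says that `b = w̄ = (w̲)*`. -/
def IsOverline (w : Weight) (b : ArcDiagram) : Prop := IsUnderline w b.star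

/-- `SubW v w` is the relation `v ⊂ w`: `v ∼ w` and `v̲ w` is an oriented cup diagram.
(Equivalently `w ⊃ v`: `w ∼ v` and `w v̄` is an oriented cap diagram.) -/
def SubW (v w : Weight) : Prop :=
  Sim v w ∧ ∃ c : ArcDiagram, IsUnderline v c ∧ OrientedCup c w

def arcAdj (a b : ArcDiagram) (i j : ℤ) : Prop :=
  (i, j) ∈ a.cups ∨ (j, i) ∈ a.cups ∨ (i, j) ∈ b.cups ∨ (j, i) ∈ b.cups

def reaches (a b : ArcDiagram) : ℤ → ℤ → Prop := Relation.ReflTransGen (arcAdj a b)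

/-- `C` is a circle of the circle diagram `a b` (cup diagram `a` glued under cap diagram
`b`): a connected component of the diagram in which every vertex lies both on a cup of `a`
and on a cap of `b`. -/
def IsCircle (a b : ArcDiagram) (C : Set ℤ) : Prop :=
  (∃ v ∈ C, ∀ j : ℤ, j ∈ C ↔ reaches a b v j) ∧
  ∀ i ∈ C, (∃ j : ℤ, (i, j) ∈ a.cups ∨ (j, i) ∈ a.cups) ∧
           (∃ j : ℤ, (i, j) ∈ b.cups ∨ (j, i) ∈ b.cups)

/-- The vertex `i` lies on a circle (rather than on a line) of the circle diagram `a b`: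
its connected component contains no ray. -/
def OnCircle (a b : ArcDiagram) (i : ℤ) : Prop :=
  ∀ j : ℤ, reaches a b i j → j ∉ a.rays ∧ j ∉ b.rays

/-- A Khovanov block of rank `n`: a block consisting of bounded weights having exactly
`n` labels `∨` and `n` labels `∧`. -/
def IsKhovanovBlock (Λ : Set Weight) (n : ℕ) : Prop :=
  IsBlock Λ ∧ ∀ w ∈ Λ, w.support.Finite ∧
    {i : ℤ | w.label i = some Label.down}.ncard = n ∧
    {i : ℤ | w.label i = some Label.up}.ncard = n

/-- An oriented circle diagram `a λ b` with weight `λ ∈ Λ`. -/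
structure OCD (Λ : Set Weight) where
  a : ArcDiagram
  wt : Weight
  b : ArcDiagram
  wt_mem : wt ∈ Λ
  oriented_a : OrientedCup a wt
  oriented_b : OrientedCap wt b

/-- A closed oriented circle diagram: one with no rays (hence no lines). -/
def OCD.Closed {Λ : Set Weight} (x : OCD Λ) : Prop := x.a.rays = ∅ ∧ x.b.rays = ∅

/-- The degree of an oriented circle diagram: its number of clockwise cups and caps. -/
noncomputable def OCD.deg {Λ : Set Weight} (x : OCD Λ) : ℕ :=
  cupDeg x.a x.wt + capDeg x.wt x.b

/-- The anti-automorphism `(a λ b) ↦ (b* λ a*)` on the level of basis vectors. -/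
def OCD.flip {Λ : Set Weight} (x : OCD Λ) : OCD Λ where
  a := x.b
  wt := x.wt
  b := x.a
  wt_mem := x.wt_mem
  oriented_a := x.oriented_b
  oriented_b := x.oriented_a

/-- The bilinear extension to the whole diagram algebra of a multiplication given by
structure constants on basis vectors. -/
noncomputable def extendMul {B : Type} {F : Type} [Field F]
    (m : B → B → (B →₀ F)) (s t : B →₀ F) : B →₀ F :=
  s.sum fun x c => t.sum fun y d => (c * d) • m x y

/-- The properties of the diagrammatically defined multiplication which come directly
from its construction: the product `(a λ b)(c μ d)` of two basis vectors is zero unless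
`b* = c`, the multiplication is associative, and it is compatible with the grading. -/
def IsDiagramMul {F : Type} [Field F] (Λ : Set Weight)
    (m : OCD Λ → OCD Λ → (OCD Λ →₀ F)) : Prop :=
  (∀ x y : OCD Λ, x.b.star ≠ y.a → m x y = 0) ∧
  (∀ x y z : OCD Λ,
    extendMul m (m x y) (Finsupp.single z 1) = extendMul m (Finsupp.single x 1) (m y z)) ∧
  (∀ x y z : OCD Λ, (m x y) z ≠ 0 → z.deg = x.deg + y.deg)

/-- Triangularity of the product `(a λ b)(c μ d)` of two basis vectors, with scalars
`s a λ b μ ∈ {0,1}` depending only on `a λ b` and `μ` but not on `d`: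
`(a λ b)(c μ d) = 0` if `b ≠ c*`; it equals `s(aλb)(μ)·(a μ d) + (†)` if `b = c*` and
`a μ` is oriented; and it equals `(†)` otherwise, where `(†)` is a linear combination of
basis vectors `(a ν d)` with `ν > μ`; moreover `s(aλb)(μ) = 1` if `b = λ̄ = c*` and
`a μ` is oriented. -/
def TriangularAt {F : Type} [Field F] {Λ : Set Weight}
    (m : OCD Λ → OCD Λ → (OCD Λ →₀ F))
    (s : ArcDiagram → Weight → ArcDiagram → Weight → F)
    (x y : OCD Λ) : Prop :=
  (x.b.star ≠ y.a → m x y = 0) ∧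
  (x.b.star = y.a → OrientedCup x.a y.wt →
    (∀ z : OCD Λ, (m x y) z ≠ 0 →
      z.a = x.a ∧ z.b = y.b ∧ (z.wt = y.wt ∨ BruhatLT y.wt z.wt)) ∧
    (∀ z : OCD Λ, z.a = x.a → z.b = y.b → z.wt = y.wt →
      (m x y) z = s x.a x.wt x.b y.wt)) ∧
  (x.b.star = y.a → ¬ OrientedCup x.a y.wt →
    ∀ z : OCD Λ, (m x y) z ≠ 0 → z.a = x.a ∧ z.b = y.b ∧ BruhatLT y.wt z.wt) ∧
  (x.b.star = y.a → IsOverline x.wt x.b → OrientedCup x.a y.wt →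
    s x.a x.wt x.b y.wt = 1)

/-- `w` is the closure `cl(v)` of the bounded weight `v`: `p` new vertices labelled `∨`
are added at the left end of the number line and `q` new vertices labelled `∧` at the
right end. -/
def IsClosureOf (p q : ℕ) (v w : Weight) : Prop :=
  v.support.Finite ∧
  (∀ i ∈ v.support, w.label i = v.label i) ∧
  ∃ L R : Set ℤ,
    w.support = L ∪ v.support ∪ R ∧
    L.Finite ∧ R.Finite ∧ L.ncard = p ∧ R.ncard = q ∧
    (∀ a ∈ L, (∀ i ∈ v.support, a < i) ∧ ∀ r ∈ R, a < r) ∧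
    (∀ r ∈ R, ∀ i ∈ v.support, i < r) ∧
    (∀ a ∈ L, w.label a = some Label.down) ∧
    (∀ r ∈ R, w.label r = some Label.up)

/-- `v ≺ w` for weights: `v` is bounded, its vertices form a subset of the vertices of
`w`, the labels agree on the vertices of `v`, and amongst the remaining vertices of `w`
no two are labelled `∨ ∧` in that order from left to right. -/
def WPrec (v w : Weight) : Prop :=
  v.support.Finite ∧ v.support ⊆ w.support ∧
  (∀ i ∈ v.support, w.label i = v.label i) ∧
  ∀ i j : ℤ, i < j → i ∈ w.support → j ∈ w.support → i ∉ v.support → j ∉ v.support →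
    ¬(w.label i = some Label.down ∧ w.label j = some Label.up)

/-- `Γ ≺ Λ` for blocks. -/
def BPrec (Γ Λ : Set Weight) : Prop := ∃ v ∈ Γ, ∃ w ∈ Λ, WPrec v w

/-!
Triangularity says that `(a ν b)(c μ λ̄)` is `s·(a μ λ̄)` plus basis vectors `(a ν' λ̄)` with
`ν' > μ`, and these come earlier in the enumeration. Hence every `M(i)` is a submodule, and on
`M(i)/M(i-1)` only the leading term survives, which is the cell module action. The basis of the
section is indexed by the cup diagrams `c` alone because `λ̄` is unique: an anticlockwise cup
diagram of a weight is forced, by induction on the length of its cups, since the partner of each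
`∨` is determined once the cups nested inside are known.
-/

theorem Sim.symm {v w : Weight} (h : Sim v w) : Sim w v := by
  obtain ⟨h1, h2, h3, ⟨e4⟩, ⟨e5⟩⟩ := h
  exact ⟨fun i => (h1 i).symm, fun i => (h2 i).symm, fun i => (h3 i).symm, ⟨e4.symm⟩, ⟨e5.symm⟩⟩

theorem Sim.trans {u v w : Weight} (h : Sim u v) (h' : Sim v w) : Sim u w := by
  obtain ⟨h1, h2, h3, ⟨e4⟩, ⟨e5⟩⟩ := h
  obtain ⟨h1', h2', h3', ⟨e4'⟩, ⟨e5'⟩⟩ := h'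
  exact ⟨fun i => (h1 i).trans (h1' i), fun i => (h2 i).trans (h2' i),
    fun i => (h3 i).trans (h3' i), ⟨e4.trans e4'⟩, ⟨e5.trans e5'⟩⟩

theorem IsBlock.sim {Λ : Set Weight} (hΛ : IsBlock Λ) {v w : Weight} (hv : v ∈ Λ)
    (hw : w ∈ Λ) : Sim v w := by
  obtain ⟨u, rfl⟩ := hΛ
  exact (Sim.symm hv).trans hw

theorem IsBlock.mem_of_sim {Λ : Set Weight} (hΛ : IsBlock Λ) {v w : Weight} (hv : v ∈ Λ)
    (h : Sim v w) : w ∈ Λ := by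
  obtain ⟨u, rfl⟩ := hΛ
  exact Sim.trans hv h

theorem ArcDiagram.ext {b b' : ArcDiagram} (hs : b.support = b'.support)
    (hc : b.cups = b'.cups) (hr : b.rays = b'.rays) : b = b' := by
  cases b; cases b'
  cases hs; cases hc; cases hr
  rfl

theorem OCD.ext {Λ : Set Weight} {x y : OCD Λ} (ha : x.a = y.a) (hw : x.wt = y.wt)
    (hb : x.b = y.b) : x = y := by
  cases x; cases y
  cases ha; cases hw; cases hb
  rfl

theorem ArcDiagram.free_or_mem_rays_or_mem_cups (b : ArcDiagram) {t : ℤ} (ht : t ∈ b.support) :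
    b.Free t ∨ t ∈ b.rays ∨ ∃ p ∈ b.cups, t = p.1 ∨ t = p.2 := by
  by_cases hr : t ∈ b.rays
  · exact Or.inr (Or.inl hr)
  by_cases hc : ∃ p ∈ b.cups, t = p.1 ∨ t = p.2
  · exact Or.inr (Or.inr hc)
  exact Or.inl ⟨ht, hr, fun p hp => not_or.mp fun h => hc ⟨p, hp, h⟩⟩

namespace IsUnderline

variable {w : Weight} {b b' : ArcDiagram}

theorem label_fst (hb : IsUnderline w b) {p : ℤ × ℤ} (hp : p ∈ b.cups) :
    w.label p.1 = some Label.down :=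
  hb.2 p hp

theorem label_snd (hb : IsUnderline w b) {p : ℤ × ℤ} (hp : p ∈ b.cups) :
    w.label p.2 = some Label.up := by
  rcases hb.1.2.2.1 p hp with h | h
  · exact h.2
  · exact nomatch (hb.label_fst hp).symm.trans h.1

theorem mem_support (hb : IsUnderline w b) {t : ℤ} {lab : Label}
    (ht : w.label t = some lab) : t ∈ b.support := by
  rw [hb.1.1]
  simp [Weight.support, ht]

theorem mem_rays_or_cup_left (hb : IsUnderline w b) {t : ℤ}
    (ht : w.label t = some Label.down) : t ∈ b.rays ∨ ∃ q, (t, q) ∈ b.cups := by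
  rcases b.free_or_mem_rays_or_mem_cups (hb.mem_support ht) with hf | hr | ⟨p, hp, rfl | rfl⟩
  · rcases hb.1.2.1 _ hf with h | h <;> exact nomatch ht.symm.trans h
  · exact Or.inl hr
  · exact Or.inr ⟨p.2, hp⟩
  · exact nomatch ht.symm.trans (hb.label_snd hp)

theorem mem_rays_or_cup_right (hb : IsUnderline w b) {t : ℤ}
    (ht : w.label t = some Label.up) : t ∈ b.rays ∨ ∃ p, (p, t) ∈ b.cups := by
  rcases b.free_or_mem_rays_or_mem_cups (hb.mem_support ht) with hf | hr | ⟨p, hp, rfl | rfl⟩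
  · rcases hb.1.2.1 _ hf with h | h <;> exact nomatch ht.symm.trans h
  · exact Or.inl hr
  · exact nomatch ht.symm.trans (hb.label_fst hp)
  · exact Or.inr ⟨p.1, hp⟩

theorem exists_cup_inside_of_down (hb : IsUnderline w b) {i j t : ℤ} (hij : (i, j) ∈ b.cups)
    (hit : i < t) (htj : t < j) (ht : w.label t = some Label.down) :
    ∃ q < j, (t, q) ∈ b.cups := by
  rcases hb.mem_rays_or_cup_left ht with hr | ⟨q, hq⟩
  · exact absurd ⟨hit, htj⟩ (b.rays_cups_noncrossing _ hij t hr)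
  · exact ⟨q, b.cups_noncrossing _ hij _ hq hit htj, hq⟩

theorem exists_cup_inside_of_up (hb : IsUnderline w b) {i j t : ℤ} (hij : (i, j) ∈ b.cups)
    (hit : i < t) (htj : t < j) (ht : w.label t = some Label.up) :
    ∃ p, i < p ∧ (p, t) ∈ b.cups := by
  rcases hb.mem_rays_or_cup_right ht with hr | ⟨p, hp⟩
  · exact absurd ⟨hit, htj⟩ (b.rays_cups_noncrossing _ hij t hr)
  refine ⟨p, ?_, hp⟩
  have hpi : p ≠ i := by
    rintro rfl
    exact (b.cups_disjoint _ hp _ hij (by simp [htj.ne])).1 rfl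
  have := fun h => b.cups_noncrossing _ hp _ hij h hit
  omega

theorem cups_subset (hb : IsUnderline w b) (hb' : IsUnderline w b') : b.cups ⊆ b'.cups := by
  suffices ∀ d : ℕ, ∀ i j : ℤ, (j - i).toNat = d → (i, j) ∈ b.cups → (i, j) ∈ b'.cups from
    fun p hp => this _ p.1 p.2 rfl hp
  intro d
  induction d using Nat.strong_induction_on with
  | _ d ih =>
  intro i j hd hij
  have hlt := b.cups_lt _ hij
  have inner : ∀ p q, i < p → q < j → (p, q) ∈ b.cups → (p, q) ∈ b'.cups :=
    fun p q hp hq h => ih _ (by have := b.cups_lt _ h; omega) p q rfl h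
  have hleft : ∀ q, (q, j) ∈ b'.cups → q ≤ i := by
    intro q hq
    by_contra! hiq
    obtain ⟨r, hrj, hr⟩ :=
      hb.exists_cup_inside_of_down hij hiq (b'.cups_lt _ hq) (hb'.label_fst hq)
    exact (b'.cups_disjoint _ (inner q r hiq hrj hr) _ hq (by simp [hrj.ne])).1 rfl
  have hright : ∀ j', (i, j') ∈ b'.cups → j ≤ j' := by
    intro j' hj'
    by_contra! hj'j
    obtain ⟨p, hip, hp⟩ :=
      hb.exists_cup_inside_of_up hij (b'.cups_lt _ hj') hj'j (hb'.label_snd hj')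
    exact (b'.cups_disjoint _ (inner p j' hip hj'j hp) _ hj' (by simp [hip.ne'])).2.2.2 rfl
  rcases hb'.mem_rays_or_cup_left (hb.label_fst hij) with hi | ⟨j', hj'⟩ <;>
    rcases hb'.mem_rays_or_cup_right (hb.label_snd hij) with hj | ⟨q, hq⟩
  · exact absurd ⟨hb.label_fst hij, hb.label_snd hij⟩ (hb'.1.2.2.2.2 i hi j hj hlt)
  · rcases (hleft q hq).lt_or_eq with hqi | rfl
    · exact absurd ⟨hqi, hlt⟩ (b'.rays_cups_noncrossing _ hq i hi)
    · exact hq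
  · rcases (hright j' hj').lt_or_eq with hjj' | rfl
    · exact absurd ⟨hlt, hjj'⟩ (b'.rays_cups_noncrossing _ hj' j hj)
    · exact hj'
  · rcases (hleft q hq).lt_or_eq with hqi | rfl
    · have := b'.cups_noncrossing _ hq _ hj' hqi hlt
      have := hright j' hj'
      omega
    · exact hq

theorem rays_subset (hb : IsUnderline w b) (hb' : IsUnderline w b') (hc : b.cups = b'.cups) :
    b.rays ⊆ b'.rays := by
  intro r hr
  have hlab := hb.1.2.2.2.1 r hr
  have hr' : r ∈ b'.support := hb'.1.1 ▸ hb.1.1 ▸ b.rays_subset hr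
  rcases b'.free_or_mem_rays_or_mem_cups hr' with hf | hr' | ⟨p, hp, hrp⟩
  · rcases hb'.1.2.1 r hf with h | h <;> rcases hlab with h' | h' <;>
      exact nomatch h.symm.trans h'
  · exact hr'
  · have := b.rays_cups_disjoint p (hc ▸ hp) r hr
    tauto

theorem unique (hb : IsUnderline w b) (hb' : IsUnderline w b') : b = b' := by
  have hc := (hb.cups_subset hb').antisymm (hb'.cups_subset hb)
  exact ArcDiagram.ext (hb.1.1.trans hb'.1.1.symm) hc
    ((hb.rays_subset hb' hc).antisymm (hb'.rays_subset hb hc.symm))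

end IsUnderline

theorem span_single_one_eq_supported {α R : Type*} [Semiring R] (Q : α → Prop) :
    Submodule.span R {v : α →₀ R | ∃ x, v = Finsupp.single x 1 ∧ Q x} =
      Finsupp.supported R R {x | Q x} := by
  rw [Finsupp.supported_eq_span_single]
  congr 1
  ext v
  simp only [Set.mem_image]
  exact exists_congr fun x => ⟨fun ⟨h, hx⟩ => ⟨hx, h.symm⟩, fun ⟨hx, h⟩ => ⟨h.symm, hx⟩⟩

theorem extendMul_single_one {B F : Type} [Field F] (m : B → B → (B →₀ F)) (x : B)
    (t : B →₀ F) : extendMul m (Finsupp.single x 1) t = t.sum fun y d => d • m x y := by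
  simp [extendMul, Finsupp.sum_single_index]

section Filtration

variable {F : Type} [Field F] {Λ : Set Weight} {l : Weight} {n : ℕ} {μ : Fin n → Weight}

/-- The paper's `M(k)`; the enumeration `μ` starts at `0`, so the paper's `μ_i` is `μ (i - 1)`. -/
noncomputable def cellFiltration (F : Type) [Field F] (Λ : Set Weight) (l : Weight)
    (μ : Fin n → Weight) (k : ℕ) : Submodule F (OCD Λ →₀ F) :=
  Submodule.span F {v : OCD Λ →₀ F | ∃ x : OCD Λ,
    v = Finsupp.single x 1 ∧ IsUnderline l x.b ∧ ∃ i : Fin n, (i : ℕ) < k ∧ x.wt = μ i}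

theorem cellFiltration_eq_supported (k : ℕ) :
    cellFiltration F Λ l μ k = Finsupp.supported F F
      {x : OCD Λ | IsUnderline l x.b ∧ ∃ i : Fin n, (i : ℕ) < k ∧ x.wt = μ i} :=
  span_single_one_eq_supported _

theorem exists_eq_wt_of_isUnderline (hΛ : IsBlock Λ) (hl : l ∈ Λ)
    (hrange : ∀ w : Weight, SubW l w ↔ ∃ i : Fin n, μ i = w) {z : OCD Λ}
    (hz : IsUnderline l z.b) : ∃ j : Fin n, μ j = z.wt :=
  (hrange z.wt).1 ⟨hΛ.sim hl z.wt_mem, z.b, hz, z.oriented_b⟩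

theorem mem_and_exists_isUnderline_orientedCup (hΛ : IsBlock Λ) (hl : l ∈ Λ)
    (hrange : ∀ w : Weight, SubW l w ↔ ∃ i : Fin n, μ i = w) (i : Fin n) :
    μ i ∈ Λ ∧ ∃ c, IsUnderline l c ∧ OrientedCup c (μ i) := by
  obtain ⟨hsim, hc⟩ := (hrange (μ i)).2 ⟨i, rfl⟩
  exact ⟨hΛ.mem_of_sim hl hsim, hc⟩

theorem cellFiltration_zero : cellFiltration F Λ l μ 0 = ⊥ := by
  rw [cellFiltration_eq_supported, ← Finsupp.supported_empty]
  congr 1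
  ext x
  simp

theorem cellFiltration_eq_span_isUnderline (hΛ : IsBlock Λ) (hl : l ∈ Λ)
    (hrange : ∀ w : Weight, SubW l w ↔ ∃ i : Fin n, μ i = w) :
    cellFiltration F Λ l μ n = Submodule.span F {v : OCD Λ →₀ F | ∃ x : OCD Λ,
      v = Finsupp.single x 1 ∧ IsUnderline l x.b} := by
  rw [cellFiltration_eq_supported, span_single_one_eq_supported]
  congr 1
  ext x
  exact ⟨And.left, fun hx =>
    ⟨hx, (exists_eq_wt_of_isUnderline hΛ hl hrange hx).imp fun j hj => ⟨j.isLt, hj.symm⟩⟩⟩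

theorem cellFiltration_lt_succ (hΛ : IsBlock Λ) (hl : l ∈ Λ)
    (hrange : ∀ w : Weight, SubW l w ↔ ∃ i : Fin n, μ i = w) (hinj : Function.Injective μ)
    {k : ℕ} (hk : k < n) : cellFiltration F Λ l μ k < cellFiltration F Λ l μ (k + 1) := by
  obtain ⟨hmem, c, hcu, hco⟩ := mem_and_exists_isUnderline_orientedCup hΛ hl hrange ⟨k, hk⟩
  let x : OCD Λ := ⟨c, μ ⟨k, hk⟩, c, hmem, hco, hco⟩
  simp only [cellFiltration_eq_supported]
  refine SetLike.lt_iff_le_and_exists.2 ⟨Finsupp.supported_mono ?_, Finsupp.single x 1,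
    Finsupp.single_mem_supported F 1 ⟨hcu, ⟨k, hk⟩, k.lt_succ_self, rfl⟩, fun h => ?_⟩
  · exact fun z ⟨hzu, i, hik, hz⟩ => ⟨hzu, i, hik.trans k.lt_succ_self, hz⟩
  · have hx : x ∈ (Finsupp.single x (1 : F)).support := by simp
    obtain ⟨-, i, hik, hi⟩ := (Finsupp.mem_supported F _).1 h hx
    obtain rfl := hinj hi
    exact hik.false

theorem existsUnique_ocd_of_orientedCup (hΛ : IsBlock Λ) (hl : l ∈ Λ)
    (hrange : ∀ w : Weight, SubW l w ↔ ∃ i : Fin n, μ i = w) (i : Fin n) {c : ArcDiagram}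
    (hc : OrientedCup c (μ i)) : ∃! x : OCD Λ, x.wt = μ i ∧ IsUnderline l x.b ∧ x.a = c := by
  obtain ⟨hmem, c₀, hc₀u, hc₀o⟩ := mem_and_exists_isUnderline_orientedCup hΛ hl hrange i
  exact ⟨⟨c, μ i, c₀, hmem, hc, hc₀o⟩, ⟨rfl, hc₀u, rfl⟩,
    fun x ⟨hw, hu, ha⟩ => OCD.ext ha hw (hu.unique hc₀u)⟩

variable (hΛ : IsBlock Λ) (hl : l ∈ Λ) {m : OCD Λ → OCD Λ → (OCD Λ →₀ F)}
  {s : ArcDiagram → Weight → ArcDiagram → Weight → F} (htri : ∀ x y : OCD Λ, TriangularAt m s x y)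
  (hrange : ∀ w : Weight, SubW l w ↔ ∃ i : Fin n, μ i = w)
  (horder : ∀ i j : Fin n, BruhatLT (μ j) (μ i) → (i : ℕ) < (j : ℕ))
include hΛ hl htri hrange horder

theorem mem_support_mul {x y z : OCD Λ} {i : Fin n} (hy : IsUnderline l y.b)
    (hyi : y.wt = μ i) (hz : z ∈ (m x y).support) :
    IsUnderline l z.b ∧
      ((x.b.star = y.a ∧ OrientedCup x.a y.wt ∧ z.a = x.a ∧ z.wt = y.wt ∧ z.b = y.b) ∨
        ∃ j : Fin n, (j : ℕ) < i ∧ z.wt = μ j) := by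
  have hmz : m x y z ≠ 0 := Finsupp.mem_support_iff.mp hz
  have hba : x.b.star = y.a := by
    by_contra h
    simp [(htri x y).1 h] at hmz
  obtain ⟨hza, hzb, hzw⟩ : z.a = x.a ∧ z.b = y.b ∧
      (OrientedCup x.a y.wt ∧ z.wt = y.wt ∨ BruhatLT y.wt z.wt) := by
    by_cases hor : OrientedCup x.a y.wt
    · obtain ⟨ha, hb, h⟩ := ((htri x y).2.1 hba hor).1 z hmz
      exact ⟨ha, hb, h.imp_left (⟨hor, ·⟩)⟩
    · obtain ⟨ha, hb, h⟩ := (htri x y).2.2.1 hba hor z hmz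
      exact ⟨ha, hb, Or.inr h⟩
  have hzu : IsUnderline l z.b := hzb ▸ hy
  refine ⟨hzu, hzw.imp (fun ⟨hor, h⟩ => ⟨hba, hor, hza, h, hzb⟩) fun h => ?_⟩
  obtain ⟨j, hj⟩ := exists_eq_wt_of_isUnderline hΛ hl hrange hzu
  exact ⟨j, horder j i (by rwa [hj, ← hyi]), hj.symm⟩

theorem mul_mem_cellFiltration {k : ℕ} {x y : OCD Λ} {i : Fin n} (hy : IsUnderline l y.b)
    (hik : (i : ℕ) < k) (hyi : y.wt = μ i) : m x y ∈ cellFiltration F Λ l μ k := by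
  rw [cellFiltration_eq_supported, Finsupp.mem_supported]
  intro z hz
  obtain ⟨hzu, ⟨-, -, -, hzw, -⟩ | ⟨j, hji, hzj⟩⟩ :=
    mem_support_mul hΛ hl htri hrange horder hy hyi hz
  · exact ⟨hzu, i, hik, hzw.trans hyi⟩
  · exact ⟨hzu, j, hji.trans hik, hzj⟩

theorem extendMul_mem_cellFiltration {k : ℕ} (x : OCD Λ) {v : OCD Λ →₀ F}
    (hv : v ∈ cellFiltration F Λ l μ k) :
    extendMul m (Finsupp.single x 1) v ∈ cellFiltration F Λ l μ k := by
  rw [extendMul_single_one]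
  refine Submodule.sum_mem _ fun y hy => Submodule.smul_mem _ _ ?_
  rw [cellFiltration_eq_supported, Finsupp.mem_supported] at hv
  obtain ⟨hyu, i, hik, hyi⟩ := hv hy
  exact mul_mem_cellFiltration hΛ hl htri hrange horder hyu hik hyi

theorem mul_sub_smul_single_mem_cellFiltration {i : Fin n} {x y z : OCD Λ}
    (hy : IsUnderline l y.b) (hyi : y.wt = μ i) (hba : x.b.star = y.a)
    (hor : OrientedCup x.a (μ i)) (hza : z.a = x.a) (hzw : z.wt = μ i) (hzb : z.b = y.b) :
    m x y - s x.a x.wt x.b (μ i) • Finsupp.single z 1 ∈ cellFiltration F Λ l μ i := by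
  have hlead : m x y z = s x.a x.wt x.b (μ i) :=
    hyi ▸ ((htri x y).2.1 hba (hyi ▸ hor)).2 z hza hzb (hzw.trans hyi.symm)
  rw [cellFiltration_eq_supported, Finsupp.mem_supported]
  intro z' hz'
  by_cases hzz : z' = z
  · subst hzz
    simp [hlead] at hz'
  have hz'mul : z' ∈ (m x y).support := by
    simpa [Finsupp.single_apply, Ne.symm hzz] using hz'
  obtain ⟨hzu, ⟨-, -, ha, hw, hb⟩ | hj⟩ := mem_support_mul hΛ hl htri hrange horder hy hyi hz'mul
  · exact absurd (OCD.ext (ha.trans hza.symm) (hw.trans (hyi.trans hzw.symm)) (hb.trans hzb.symm))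
      hzz
  · exact ⟨hzu, hj⟩

theorem mul_mem_cellFiltration_of_not_oriented {i : Fin n} {x y : OCD Λ}
    (hy : IsUnderline l y.b) (hyi : y.wt = μ i)
    (h : ¬(x.b.star = y.a ∧ OrientedCup x.a (μ i))) : m x y ∈ cellFiltration F Λ l μ i := by
  rw [cellFiltration_eq_supported, Finsupp.mem_supported]
  intro z hz
  obtain ⟨hzu, ⟨hba, hor, -⟩ | hj⟩ := mem_support_mul hΛ hl htri hrange horder hy hyi hz
  · exact absurd ⟨hba, hyi ▸ hor⟩ h
  · exact ⟨hzu, hj⟩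

end Filtration

theorem statement_16_general (F : Type) [Field F] (Λ : Set Weight) (hΛ : IsBlock Λ)
    (l : Weight) (hl : l ∈ Λ)
    (m : OCD Λ → OCD Λ → (OCD Λ →₀ F))
    (s : ArcDiagram → Weight → ArcDiagram → Weight → F)
    (htri : ∀ x y : OCD Λ, TriangularAt m s x y)
    (n : ℕ)
    (μ : Fin n → Weight)
    (hinj : Function.Injective μ)
    (hrange : ∀ w : Weight, SubW l w ↔ ∃ i : Fin n, μ i = w)
    (horder : ∀ i j : Fin n, BruhatLT (μ j) (μ i) → (i : ℕ) < (j : ℕ)) :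
    let Mi : ℕ → Submodule F (OCD Λ →₀ F) := fun k =>
      Submodule.span F {v : OCD Λ →₀ F | ∃ x : OCD Λ,
        v = Finsupp.single x 1 ∧ IsUnderline l x.b ∧ ∃ i : Fin n, (i : ℕ) < k ∧ x.wt = μ i}
    -- each M(i) is a K_Λ-submodule of P(λ)
    (∀ k : ℕ, ∀ x : OCD Λ, ∀ v ∈ Mi k, extendMul m (Finsupp.single x 1) v ∈ Mi k) ∧
    -- the filtration runs from 0 to P(λ), with strict inclusions
    Mi 0 = ⊥ ∧
    Mi n = Submodule.span F {v : OCD Λ →₀ F | ∃ x : OCD Λ,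
      v = Finsupp.single x 1 ∧ IsUnderline l x.b} ∧
    (∀ k : ℕ, k < n → Mi k < Mi (k + 1)) ∧
    -- the sections: M(i)/M(i-1) ≅ V(μ_i)⟨deg(μ_i λ̄)⟩
    (∀ i : Fin n,
      -- the images of the basis vectors (c μ_i λ̄) correspond bijectively to the basis
      -- (c μ_i| of the cell module V(μ_i)
      (∀ c : ArcDiagram, OrientedCup c (μ i) →
        ∃! x : OCD Λ, x.wt = μ i ∧ IsUnderline l x.b ∧ x.a = c) ∧
      -- the grading is shifted by the constant deg(μ_i λ̄)
      (∀ x x' : OCD Λ, x.wt = μ i → IsUnderline l x.b → x'.wt = μ i →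
        IsUnderline l x'.b →
        capDeg x.wt x.b = capDeg x'.wt x'.b ∧
        x.deg = cupDeg x.a x.wt + capDeg x.wt x.b) ∧
      -- the K_Λ-action on the section agrees with the cell module action
      (∀ x y : OCD Λ, y.wt = μ i → IsUnderline l y.b →
        ((x.b.star = y.a ∧ OrientedCup x.a (μ i)) →
          ∀ z : OCD Λ, z.a = x.a → z.wt = μ i → z.b = y.b →
            m x y - s x.a x.wt x.b (μ i) • Finsupp.single z 1 ∈ Mi (i : ℕ)) ∧
        (¬(x.b.star = y.a ∧ OrientedCup x.a (μ i)) →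
          m x y ∈ Mi (i : ℕ)))) := by
  intro Mi
  refine ⟨fun k x v hv => extendMul_mem_cellFiltration hΛ hl htri hrange horder x hv,
    cellFiltration_zero, cellFiltration_eq_span_isUnderline hΛ hl hrange,
    fun k hk => cellFiltration_lt_succ hΛ hl hrange hinj hk, fun i => ⟨?_, ?_, ?_⟩⟩
  · exact fun c hc => existsUnique_ocd_of_orientedCup hΛ hl hrange i hc
  · intro x x' hx hxu hx' hxu'
    exact ⟨by rw [hx, hx', hxu.unique hxu'], rfl⟩
  · intro x y hyi hyu
    exact ⟨fun ⟨hba, hor⟩ z hza hzw hzb => mul_sub_smul_single_mem_cellFiltration hΛ hl htri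
        hrange horder hyu hyi hba hor hza hzw hzb,
      mul_mem_cellFiltration_of_not_oriented hΛ hl htri hrange horder hyu hyi⟩

/-- Let `Λ` be a block and `λ ∈ Λ`. Enumerating the `2^{def(λ)}` weights
`μ ⊃ λ` as `μ_1, …, μ_n = λ` so that `μ_i > μ_j` implies `i < j`, and letting `M(i)` be
the subspace of `P(λ) = K_Λ e_λ` spanned by the basis vectors `(c μ_k λ̄)` with `k ≤ i`,
the chain `{0} = M(0) ⊂ M(1) ⊂ ⋯ ⊂ M(n) = P(λ)` is a filtration of `P(λ)` by
`K_Λ`-submodules with `M(i)/M(i-1) ≅ V(μ_i)⟨deg(μ_i λ̄)⟩` as graded `K_Λ`-modules.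
(Here `K_Λ` is given by any multiplication satisfying the defining and triangularity
properties of the diagram algebra, with structure constants `s`; the section
`M(i)/M(i-1)` is described explicitly via its diagram basis `(c μ_i λ̄) + M(i-1)` and the
cell module action `(aλb)(cμ_i| = s_{aλb}(μ_i)(aμ_i|`.) -/
theorem statement_16 (F : Type) [Field F] (Λ : Set Weight) (hΛ : IsBlock Λ)
    (l : Weight) (hl : l ∈ Λ)
    (m : OCD Λ → OCD Λ → (OCD Λ →₀ F)) (hm : IsDiagramMul Λ m)
    (s : ArcDiagram → Weight → ArcDiagram → Weight → F)
    (hs01 : ∀ (a : ArcDiagram) (v : Weight) (b : ArcDiagram) (u : Weight),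
      s a v b u = 0 ∨ s a v b u = 1)
    (htri : ∀ x y : OCD Λ, TriangularAt m s x y)
    (n : ℕ) (hn : ∀ c : ArcDiagram, IsUnderline l c → n = 2 ^ c.cups.ncard)
    (μ : Fin n → Weight)
    (hinj : Function.Injective μ)
    (hrange : ∀ w : Weight, SubW l w ↔ ∃ i : Fin n, μ i = w)
    (hlast : ∀ i : Fin n, (i : ℕ) = n - 1 → μ i = l)
    (horder : ∀ i j : Fin n, BruhatLT (μ j) (μ i) → (i : ℕ) < (j : ℕ)) :
    let Mi : ℕ → Submodule F (OCD Λ →₀ F) := fun k =>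
      Submodule.span F {v : OCD Λ →₀ F | ∃ x : OCD Λ,
        v = Finsupp.single x 1 ∧ IsUnderline l x.b ∧ ∃ i : Fin n, (i : ℕ) < k ∧ x.wt = μ i}
    -- each M(i) is a K_Λ-submodule of P(λ)
    (∀ k : ℕ, ∀ x : OCD Λ, ∀ v ∈ Mi k, extendMul m (Finsupp.single x 1) v ∈ Mi k) ∧
    -- the filtration runs from 0 to P(λ), with strict inclusions
    Mi 0 = ⊥ ∧
    Mi n = Submodule.span F {v : OCD Λ →₀ F | ∃ x : OCD Λ,
      v = Finsupp.single x 1 ∧ IsUnderline l x.b} ∧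
    (∀ k : ℕ, k < n → Mi k < Mi (k + 1)) ∧
    -- the sections: M(i)/M(i-1) ≅ V(μ_i)⟨deg(μ_i λ̄)⟩
    (∀ i : Fin n,
      -- the images of the basis vectors (c μ_i λ̄) correspond bijectively to the basis
      -- (c μ_i| of the cell module V(μ_i)
      (∀ c : ArcDiagram, OrientedCup c (μ i) →
        ∃! x : OCD Λ, x.wt = μ i ∧ IsUnderline l x.b ∧ x.a = c) ∧
      -- the grading is shifted by the constant deg(μ_i λ̄)
      (∀ x x' : OCD Λ, x.wt = μ i → IsUnderline l x.b → x'.wt = μ i →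
        IsUnderline l x'.b →
        capDeg x.wt x.b = capDeg x'.wt x'.b ∧
        x.deg = cupDeg x.a x.wt + capDeg x.wt x.b) ∧
      -- the K_Λ-action on the section agrees with the cell module action
      (∀ x y : OCD Λ, y.wt = μ i → IsUnderline l y.b →
        ((x.b.star = y.a ∧ OrientedCup x.a (μ i)) →
          ∀ z : OCD Λ, z.a = x.a → z.wt = μ i → z.b = y.b →
            m x y - s x.a x.wt x.b (μ i) • Finsupp.single z 1 ∈ Mi (i : ℕ)) ∧
        (¬(x.b.star = y.a ∧ OrientedCup x.a (μ i)) →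
          m x y ∈ Mi (i : ℕ)))) :=
  statement_16_general F Λ hΛ l hl m s htri n μ hinj hrange horder

end BrundanStroppel
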